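/- Let f : ℝ → (0,1) be C¹. With M and a as above, the limit as t → +∞ of M(t, Φ⁻¹(f(t)), ∫_{-∞}^t f dγ) equals I(∫_ℝ f dγ), where I(x) = φ(Φ⁻¹(x)). -/

import Mathlib

open Real MeasureTheory Set Filter

noncomputable def phi (s : ℝ) : ℝ := Real.exp (-s ^ 2 / 2) / Real.sqrt (2 * Real.pi)

noncomputable def Phi (t : ℝ) : ℝ := ∫ s in Set.Iic t, phi s

noncomputable def GaussI (x : ℝ) : ℝ :=
  if 0 < x ∧ x < 1 then phi (Function.invFun Phi x) else 0

noncomputable def M (a : ℝ → ℝ → ℝ → ℝ) (t p y : ℝ) : ℝ :=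
  phi ((p - a t p y * t) / Real.sqrt (1 + (a t p y) ^ 2)) *
    Phi ((t + a t p y * p) / Real.sqrt (1 + (a t p y) ^ 2))

/-!
On the whole line `∫ Φ(α s + b) φ(s) ds = Φ(b / √(1 + α²))`, i.e. `P(Z₁ - α Z₂ ≤ b)` for
independent standard Gaussians; it is proved here by differentiating in `b`. With
`q = (p - a t) / √(1 + a²)`, the defining equation of `a` is this integral cut off at `s = t`,
so `y ≤ Φ(q) ≤ y + 1 - Φ(t)`. Hence `Φ(q) → ∫ f dγ`, i.e. `q → Φ⁻¹(∫ f dγ)`. The other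
argument of `M` equals `t √(1 + a²) + a q ≥ t - |q|`, so its `Φ` tends to `1`.
-/

open ProbabilityTheory

lemma phi_eq_gaussianPDFReal : phi = gaussianPDFReal 0 1 := by
  funext s
  simp [phi, gaussianPDFReal, div_eq_inv_mul, mul_comm]

lemma phi_pos (s : ℝ) : 0 < phi s := by
  rw [phi_eq_gaussianPDFReal]
  exact gaussianPDFReal_pos _ _ _ one_ne_zero

lemma continuous_phi : Continuous phi := by
  unfold phi
  fun_prop

lemma phi_le_inv_sqrt_two_pi (s : ℝ) : phi s ≤ (√(2 * π))⁻¹ := by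
  rw [phi, div_eq_inv_mul]
  refine mul_le_of_le_one_right (by positivity) (exp_le_one_iff.2 ?_)
  nlinarith [sq_nonneg s]

lemma integrable_phi : Integrable phi := by
  rw [phi_eq_gaussianPDFReal]
  exact integrable_gaussianPDFReal _ _

lemma integral_phi : ∫ s, phi s = 1 := by
  rw [phi_eq_gaussianPDFReal]
  exact integral_gaussianPDFReal_eq_one _ one_ne_zero

lemma Phi_eq_cdf : Phi = cdf (gaussianReal 0 1) := by
  funext t
  rw [cdf_eq_real, measureReal_def, gaussianReal_apply_eq_integral _ one_ne_zero,
    ENNReal.toReal_ofReal (setIntegral_nonneg measurableSet_Iic fun s _ ↦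
      gaussianPDFReal_nonneg _ _ _), ← phi_eq_gaussianPDFReal, Phi]

lemma Phi_nonneg (t : ℝ) : 0 ≤ Phi t := Phi_eq_cdf ▸ cdf_nonneg _ t

lemma Phi_le_one (t : ℝ) : Phi t ≤ 1 := Phi_eq_cdf ▸ cdf_le_one _ t

lemma tendsto_Phi_atBot : Tendsto Phi atBot (nhds 0) := Phi_eq_cdf ▸ tendsto_cdf_atBot _

lemma tendsto_Phi_atTop : Tendsto Phi atTop (nhds 1) := Phi_eq_cdf ▸ tendsto_cdf_atTop _

lemma integral_Ioi_phi (t : ℝ) : ∫ s in Ioi t, phi s = 1 - Phi t := by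
  rw [← integral_phi, ← intervalIntegral.integral_Iic_add_Ioi integrable_phi.integrableOn
    integrable_phi.integrableOn, Phi, add_sub_cancel_left]

lemma Phi_sub_Phi (u t : ℝ) : Phi t - Phi u = ∫ s in u..t, phi s :=
  intervalIntegral.integral_Iic_sub_Iic integrable_phi.integrableOn
    integrable_phi.integrableOn

lemma hasDerivAt_Phi (t : ℝ) : HasDerivAt Phi (phi t) t := by
  have h : HasDerivAt (fun x ↦ Phi 0 + ∫ s in (0 : ℝ)..x, phi s) (phi t) t :=
    (intervalIntegral.integral_hasDerivAt_right integrable_phi.intervalIntegrable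
      continuous_phi.aestronglyMeasurable.stronglyMeasurableAtFilter
      continuous_phi.continuousAt).const_add _
  convert h using 1
  funext x
  rw [← Phi_sub_Phi, add_sub_cancel]

lemma continuous_Phi : Continuous Phi :=
  continuous_iff_continuousAt.2 fun t ↦ (hasDerivAt_Phi t).continuousAt

lemma strictMono_Phi : StrictMono Phi := fun u t hut ↦ by
  rw [← sub_pos, Phi_sub_Phi]
  exact intervalIntegral.intervalIntegral_pos_of_pos_on integrable_phi.intervalIntegrable
    (fun x _ ↦ phi_pos x) hut

lemma exists_Phi_eq {y : ℝ} (h0 : 0 < y) (h1 : y < 1) : ∃ x, Phi x = y :=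
  mem_range_of_exists_le_of_exists_ge continuous_Phi
    (tendsto_Phi_atBot.eventually (eventually_le_nhds h0)).exists
    (tendsto_Phi_atTop.eventually (eventually_ge_nhds h1)).exists

lemma integrable_mul_phi {g : ℝ → ℝ} {C : ℝ} (hg : AEStronglyMeasurable g)
    (hC : ∀ s, |g s| ≤ C) : Integrable fun s ↦ g s * phi s :=
  integrable_phi.bdd_mul hg (ae_of_all _ hC)

lemma integrable_Phi_comp_mul_phi {g : ℝ → ℝ} (hg : Measurable g) :
    Integrable fun s ↦ Phi (g s) * phi s :=
  integrable_mul_phi (continuous_Phi.measurable.comp hg).aestronglyMeasurable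
    fun _ ↦ (abs_of_nonneg (Phi_nonneg _)).trans_le (Phi_le_one _)

lemma integrable_mul_phi_of_mem_Ioo {g : ℝ → ℝ} (hg : Measurable g)
    (hg01 : ∀ x, g x ∈ Ioo 0 1) : Integrable fun x ↦ g x * phi x :=
  integrable_mul_phi hg.aestronglyMeasurable fun x ↦
    abs_le.2 ⟨by linarith [(hg01 x).1], (hg01 x).2.le⟩

lemma integral_phi_mul_phi (α b : ℝ) :
    ∫ s, phi (α * s + b) * phi s = phi (b / √(1 + α ^ 2)) / √(1 + α ^ 2) := by
  have hc2 : (0 : ℝ) < 1 + α ^ 2 := by positivity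
  set c := √(1 + α ^ 2)
  have hc : 0 < c := sqrt_pos.2 hc2
  have hcsq : c ^ 2 = 1 + α ^ 2 := sq_sqrt hc2.le
  -- complete the square in `s`
  have hsq : ∀ s, phi (α * s + b) * phi s = exp (-(b / c) ^ 2 / 2) / (2 * π) *
      exp (-((1 + α ^ 2) / 2) * (s + α * b / (1 + α ^ 2)) ^ 2) := by
    intro s
    rw [phi, phi, div_mul_div_comm, ← exp_add, mul_self_sqrt (by positivity),
      div_mul_eq_mul_div, ← exp_add, div_pow, hcsq]
    congr 2
    field_simp
    ring
  simp_rw [hsq]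
  rw [integral_const_mul, integral_add_right_eq_self
    (fun s ↦ exp (-((1 + α ^ 2) / 2) * s ^ 2)), integral_gaussian,
    show π / ((1 + α ^ 2) / 2) = 2 * π / c ^ 2 by rw [hcsq]; field_simp,
    sqrt_div (by positivity), sqrt_sq hc.le, phi]
  have : √(2 * π) ≠ 0 := by positivity
  field_simp
  rw [sq_sqrt (by positivity)]

lemma hasDerivAt_integral_Phi_mul_phi (α x : ℝ) :
    HasDerivAt (fun x ↦ ∫ s, Phi (α * s + x) * phi s)
      (∫ s, phi (α * s + x) * phi s) x := by
  refine (hasDerivAt_integral_of_dominated_loc_of_deriv_le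
    (F := fun x s ↦ Phi (α * s + x) * phi s) (F' := fun x s ↦ phi (α * s + x) * phi s)
    (bound := fun s ↦ (√(2 * π))⁻¹ * phi s)
    (Metric.ball_mem_nhds x one_pos) (.of_forall fun y ↦
      (integrable_Phi_comp_mul_phi (by fun_prop)).aestronglyMeasurable)
    (integrable_Phi_comp_mul_phi (by fun_prop))
    (((continuous_phi.comp (by fun_prop)).mul continuous_phi).aestronglyMeasurable)
    (ae_of_all _ fun s y _ ↦ ?_) (integrable_phi.const_mul _)
    (ae_of_all _ fun s y _ ↦ ?_)).2
  · rw [norm_of_nonneg (mul_nonneg (phi_pos _).le (phi_pos _).le)]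
    exact mul_le_mul_of_nonneg_right (phi_le_inv_sqrt_two_pi _) (phi_pos s).le
  · simpa using ((hasDerivAt_Phi _).comp y ((hasDerivAt_id' y).const_add (α * s))).mul_const
      (phi s)

lemma tendsto_integral_Phi_mul_phi_atBot (α : ℝ) :
    Tendsto (fun x ↦ ∫ s, Phi (α * s + x) * phi s) atBot (nhds 0) := by
  rw [← integral_zero ℝ ℝ]
  refine tendsto_integral_filter_of_dominated_convergence phi
    (.of_forall fun x ↦ (integrable_Phi_comp_mul_phi (by fun_prop)).aestronglyMeasurable)
    (.of_forall fun x ↦ ae_of_all _ fun s ↦ ?_) integrable_phi (ae_of_all _ fun s ↦ ?_)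
  · rw [norm_of_nonneg (mul_nonneg (Phi_nonneg _) (phi_pos _).le)]
    exact mul_le_of_le_one_left (phi_pos s).le (Phi_le_one _)
  · simpa using (tendsto_Phi_atBot.comp
      (tendsto_atBot_add_const_left _ (α * s) tendsto_id)).mul_const (phi s)

lemma eq_of_hasDerivAt_of_tendsto_atBot {f g f' : ℝ → ℝ} {l : ℝ}
    (hf : ∀ x, HasDerivAt f (f' x) x) (hg : ∀ x, HasDerivAt g (f' x) x)
    (hfl : Tendsto f atBot (nhds l)) (hgl : Tendsto g atBot (nhds l)) : f = g := by
  have hconst : ∀ x y, (f - g) x = (f - g) y :=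
    is_const_of_deriv_eq_zero (fun x ↦ ((hf x).sub (hg x)).differentiableAt)
      fun x ↦ ((hf x).sub (hg x)).deriv.trans (sub_self _)
  funext x
  have hlim : Tendsto (f - g) atBot (nhds ((f - g) x)) :=
    tendsto_const_nhds.congr fun y ↦ hconst x y
  have h0 : Tendsto (f - g) atBot (nhds 0) := by
    rw [← sub_self l]
    exact hfl.sub hgl
  exact sub_eq_zero.1 (tendsto_nhds_unique hlim h0)

lemma integral_Phi_mul_phi (α b : ℝ) :
    ∫ s, Phi (α * s + b) * phi s = Phi (b / √(1 + α ^ 2)) := by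
  have hc : 0 < √(1 + α ^ 2) := by positivity
  refine congrFun (eq_of_hasDerivAt_of_tendsto_atBot (hasDerivAt_integral_Phi_mul_phi α)
    (fun x ↦ ?_) (tendsto_integral_Phi_mul_phi_atBot α)
    (tendsto_Phi_atBot.comp (tendsto_id.atBot_div_const hc))) b
  rw [integral_phi_mul_phi]
  simpa [div_eq_mul_inv] using (hasDerivAt_Phi _).comp x ((hasDerivAt_id x).div_const _)

lemma Phi_eq_setIntegral_Iic_add_Ioi (α p t : ℝ) :
    Phi ((p - α * t) / √(1 + α ^ 2)) =
      (∫ s in Iic t, Phi (α * (s - t) + p) * phi s) +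
        ∫ s in Ioi t, Phi (α * (s - t) + p) * phi s := by
  have hint : Integrable fun s ↦ Phi (α * (s - t) + p) * phi s :=
    integrable_Phi_comp_mul_phi (by fun_prop)
  rw [intervalIntegral.integral_Iic_add_Ioi hint.integrableOn hint.integrableOn,
    ← integral_Phi_mul_phi]
  congr with s
  ring_nf

lemma setIntegral_Iic_le_Phi (α p t : ℝ) :
    ∫ s in Iic t, Phi (α * (s - t) + p) * phi s ≤ Phi ((p - α * t) / √(1 + α ^ 2)) := by
  rw [Phi_eq_setIntegral_Iic_add_Ioi, le_add_iff_nonneg_right]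
  exact setIntegral_nonneg measurableSet_Ioi fun s _ ↦ mul_nonneg (Phi_nonneg _) (phi_pos s).le

lemma Phi_le_setIntegral_Iic_add (α p t : ℝ) :
    Phi ((p - α * t) / √(1 + α ^ 2)) ≤
      (∫ s in Iic t, Phi (α * (s - t) + p) * phi s) + (1 - Phi t) := by
  rw [Phi_eq_setIntegral_Iic_add_Ioi, add_le_add_iff_left, ← integral_Ioi_phi]
  exact setIntegral_mono (integrable_Phi_comp_mul_phi (by fun_prop)).integrableOn
    integrable_phi.integrableOn fun s ↦ mul_le_of_le_one_left (phi_pos s).le (Phi_le_one _)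

lemma tendsto_Phi_of_setIntegral_Iic_eq {A p y : ℝ → ℝ} {Y : ℝ}
    (h : ∀ t, ∫ s in Iic t, Phi (A t * (s - t) + p t) * phi s = y t)
    (hy : Tendsto y atTop (nhds Y)) :
    Tendsto (fun t ↦ Phi ((p t - A t * t) / √(1 + A t ^ 2))) atTop (nhds Y) := by
  have hupper : Tendsto (fun t ↦ y t + (1 - Phi t)) atTop (nhds Y) := by
    simpa using hy.add ((tendsto_const_nhds (x := (1 : ℝ))).sub tendsto_Phi_atTop)
  refine tendsto_of_tendsto_of_tendsto_of_le_of_le hy hupper (fun t ↦ ?_) fun t ↦ ?_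
  · exact h t ▸ setIntegral_Iic_le_Phi (A t) (p t) t
  · exact h t ▸ Phi_le_setIntegral_Iic_add (A t) (p t) t

lemma StrictMono.tendsto_of_tendsto_comp {α β γ : Type*} [LinearOrder α] [TopologicalSpace α]
    [OrderTopology α] [LinearOrder β] [TopologicalSpace β] [OrderClosedTopology β]
    {g : α → β} (hg : StrictMono g) {q : γ → α} {l : Filter γ} {x : α}
    (h : Tendsto (g ∘ q) l (nhds (g x))) : Tendsto q l (nhds x) := by
  refine tendsto_order.2 ⟨fun z hz ↦ ?_, fun z hz ↦ ?_⟩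
  · exact (h.eventually (eventually_gt_nhds (hg hz))).mono fun _ ↦ hg.lt_iff_lt.1
  · exact (h.eventually (eventually_lt_nhds (hg hz))).mono fun _ ↦ hg.lt_iff_lt.1

lemma sub_le_add_mul_div_sqrt {A p t K : ℝ} (hq : |(p - A * t) / √(1 + A ^ 2)| ≤ K)
    (hK : K ≤ t) : t - K ≤ (t + A * p) / √(1 + A ^ 2) := by
  have hc2 : (0 : ℝ) < 1 + A ^ 2 := by positivity
  set c := √(1 + A ^ 2)
  set q := (p - A * t) / c
  have hc : 0 < c := sqrt_pos.2 hc2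
  have hc1 : 1 ≤ c := one_le_sqrt.2 (by nlinarith)
  have hAc : |A| ≤ c := by rw [← sqrt_sq_eq_abs]; exact sqrt_le_sqrt (by linarith)
  have hr : (t + A * p) / c = t * c + A * q := by
    have hcc : c * c = 1 + A ^ 2 := mul_self_sqrt hc2.le
    have hqc : q * c = p - A * t := div_mul_cancel₀ _ hc.ne'
    rw [div_eq_iff hc.ne']
    linear_combination (-t) * hcc - A * hqc
  have hAq : |A * q| ≤ c * K := by
    rw [abs_mul]
    exact mul_le_mul hAc hq (abs_nonneg _) hc.le
  rw [hr]
  nlinarith [neg_abs_le (A * q), mul_le_mul_of_nonneg_right hc1 (sub_nonneg.2 hK)]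

lemma tendsto_add_mul_div_sqrt_atTop {A p : ℝ → ℝ} {L : ℝ}
    (h : Tendsto (fun t ↦ (p t - A t * t) / √(1 + A t ^ 2)) atTop (nhds L)) :
    Tendsto (fun t ↦ (t + A t * p t) / √(1 + A t ^ 2)) atTop atTop := by
  have hbdd : ∀ᶠ t in atTop, |(p t - A t * t) / √(1 + A t ^ 2)| ≤ |L| + 1 :=
    ((continuous_abs.tendsto L).comp h).eventually (eventually_le_nhds (lt_add_one _))
  refine tendsto_atTop_mono' atTop ?_ (tendsto_atTop_add_const_right atTop (-(|L| + 1)) tendsto_id)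
  filter_upwards [hbdd, eventually_ge_atTop (|L| + 1)] with t hq ht
  exact sub_le_add_mul_div_sqrt hq ht

lemma setIntegral_pos_of_pos {X : Type*} [MeasurableSpace X] {μ : Measure X} {g : X → ℝ}
    {s : Set X} (hμs : μ s ≠ 0) (hg : ∀ x, 0 < g x)
    (hgi : IntegrableOn g s μ) : 0 < ∫ x in s, g x ∂μ := by
  rw [setIntegral_pos_iff_support_of_nonneg_ae (ae_of_all _ fun x ↦ (hg x).le) hgi,
    Function.support_eq_univ fun x ↦ (hg x).ne', univ_inter]
  exact pos_iff_ne_zero.2 hμs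

lemma setIntegral_mul_phi_mem_Ioo {g : ℝ → ℝ} (hg : Measurable g) (hg01 : ∀ x, g x ∈ Ioo 0 1)
    {s : Set ℝ} (hvol : volume s ≠ 0) :
    ∫ x in s, g x * phi x ∈ Ioo 0 (∫ x in s, phi x) := by
  have hgi := integrable_mul_phi_of_mem_Ioo hg hg01
  have hgi' := integrable_mul_phi_of_mem_Ioo (g := fun x ↦ 1 - g x) (by fun_prop)
    fun x ↦ ⟨sub_pos.2 (hg01 x).2, by linarith [(hg01 x).1]⟩
  refine ⟨setIntegral_pos_of_pos hvol (fun x ↦ mul_pos (hg01 x).1 (phi_pos x)) hgi.integrableOn,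
    sub_pos.1 ?_⟩
  rw [← integral_sub integrable_phi.integrableOn hgi.integrableOn]
  simp_rw [← one_sub_mul]
  exact setIntegral_pos_of_pos hvol (fun x ↦ mul_pos (sub_pos.2 (hg01 x).2) (phi_pos x))
    hgi'.integrableOn

theorem stmt_13 (a : ℝ → ℝ → ℝ → ℝ)
    (ha : ∀ t p y : ℝ, 0 < y → y < Phi t →
      ∫ s in Set.Iic t, Phi (a t p y * (s - t) + p) * phi s = y)
    (f : ℝ → ℝ) (hf : ContDiff ℝ 1 f) (hf01 : ∀ t, f t ∈ Set.Ioo (0 : ℝ) 1) :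
    Tendsto (fun t => M a t (Function.invFun Phi (f t)) (∫ s in Set.Iic t, f s * phi s))
      atTop (nhds (GaussI (∫ s, f s * phi s))) := by
  have hfm : Measurable f := hf.continuous.measurable
  set Y := ∫ s, f s * phi s
  set y := fun t ↦ ∫ s in Iic t, f s * phi s
  obtain ⟨hY0, hY1⟩ : Y ∈ Ioo 0 1 := by
    simpa [integral_phi] using setIntegral_mul_phi_mem_Ioo (s := univ) hfm hf01 (by simp)
  have hy : ∀ t, y t ∈ Ioo 0 (Phi t) := fun t ↦
    setIntegral_mul_phi_mem_Ioo hfm hf01 (by simp)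
  have hyY : Tendsto y atTop (nhds Y) :=
    (aecover_Iic tendsto_id).integral_tendsto_of_countably_generated
      (integrable_mul_phi_of_mem_Ioo hfm hf01)
  have hL : Phi (Function.invFun Phi Y) = Y := Function.invFun_eq (exists_Phi_eq hY0 hY1)
  set p := fun t ↦ Function.invFun Phi (f t)
  set A := fun t ↦ a t (p t) (y t)
  have hq : Tendsto (fun t ↦ (p t - A t * t) / √(1 + A t ^ 2)) atTop
      (nhds (Function.invFun Phi Y)) :=
    strictMono_Phi.tendsto_of_tendsto_comp <| by
      rw [hL]
      exact tendsto_Phi_of_setIntegral_Iic_eq (fun t ↦ ha _ _ _ (hy t).1 (hy t).2) hyY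
  rw [GaussI, if_pos ⟨hY0, hY1⟩, ← mul_one (phi _)]
  exact ((continuous_phi.tendsto _).comp hq).mul
    (tendsto_Phi_atTop.comp (tendsto_add_mul_div_sqrt_atTop hq))
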